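/- arXiv:2604.27890 — 3 statements merged into one kernel-verified Lean document; each statement's English description precedes it below -/
import Mathlib

section
/- Let $R$ be a DVR with uniformizer $\pi$, $V$ a finite free $R$-module, and $F$ an $\mathbb{R}$-filtration of $V$ in the DVR sense. A free $R$-module basis $s_1,\ldots,s_N$ of $V$ satisfies $\operatorname{ord}_F(a_1 s_1 + \cdots + a_N s_N) = \min_i \operatorname{ord}_F(a_i s_i)$ for all $a_i \in R$ if and only if $F^\lambda V = \bigoplus_{i=1}^N \pi^{\max\{0, \lceil \lambda - \operatorname{ord}_F(s_i)\rceil\}} R s_i$ for all $\lambda \in \mathbb{R}$. -/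
/-- An `ℝ`-filtration of a finite free module `V` over a DVR `R` with uniformizer `π`:
a decreasing, left-continuous, exhaustive, separated family of `R`-submodules
satisfying `F^{λ+1}V ∩ πV = πF^λV`. -/
structure DVRFil (R V : Type*) [CommRing R] [AddCommGroup V] [Module R V] (π : R) where
  F : ℝ → Submodule R V
  mono : ∀ {a b : ℝ}, a ≤ b → F b ≤ F a
  leftCont : ∀ a : ℝ, F a = ⨅ (b : ℝ) (_ : b < a), F b
  exhaustive : ∃ a : ℝ, F a = ⊤
  separated : (⨅ a : ℝ, F a) = ⊥
  compat : ∀ a : ℝ,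
    F (a + 1) ⊓ Submodule.map (LinearMap.lsmul R V π) ⊤
      = Submodule.map (LinearMap.lsmul R V π) (F a)

/-- `ord_F(s) = sup {λ | s ∈ F^λ V}` (equals `+∞` exactly for `s = 0`). -/
noncomputable def DVRFil.ord {R V : Type*} [CommRing R] [AddCommGroup V] [Module R V]
    {π : R} (Φ : DVRFil R V π) (s : V) : EReal :=
  sSup ((fun a : ℝ => (a : EReal)) '' {a : ℝ | s ∈ Φ.F a})

section Aux

variable {R V : Type*} [CommRing R] [AddCommGroup V] [Module R V] {π : R} (Φ : DVRFil R V π)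

lemma DVRFil.mem_iff (x : V) (l : ℝ) : x ∈ Φ.F l ↔ (l : EReal) ≤ Φ.ord x := by
  constructor
  · intro hx; exact le_sSup ⟨l, hx, rfl⟩
  · intro h
    rw [Φ.leftCont l]
    simp only [Submodule.mem_iInf]
    intro c hc
    have hlt : (c : EReal) < Φ.ord x := lt_of_lt_of_le (by exact_mod_cast hc) h
    rw [DVRFil.ord, lt_sSup_iff] at hlt
    obtain ⟨e, ⟨a, ha, rfl⟩, hce⟩ := hlt
    have hca : (c : EReal) ≤ (a : EReal) := hce.le
    exact Φ.mono (by exact_mod_cast hca) ha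

lemma ereal_ext {e₁ e₂ : EReal} (h : ∀ l : ℝ, (l : EReal) ≤ e₁ ↔ (l : EReal) ≤ e₂) :
    e₁ = e₂ := by
  by_contra hne
  rcases lt_or_gt_of_ne hne with hlt | hlt
  · obtain ⟨z, hz1, hz2⟩ := EReal.exists_between_coe_real hlt
    exact absurd ((h z).mpr hz2.le) (not_le.mpr hz1)
  · obtain ⟨z, hz1, hz2⟩ := EReal.exists_between_coe_real hlt
    exact absurd ((h z).mp hz2.le) (not_le.mpr hz1)

lemma DVRFil.pi_smul_mem (hinj : ∀ y : V, π • y = 0 → y = 0) (x : V) (l : ℝ) :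
    π • x ∈ Φ.F (l + 1) ↔ x ∈ Φ.F l := by
  constructor
  · intro h
    have h2 : π • x ∈ Submodule.map (LinearMap.lsmul R V π) (Φ.F l) := by
      rw [← Φ.compat l]
      exact ⟨h, ⟨x, Submodule.mem_top, rfl⟩⟩
    obtain ⟨t, ht, hts⟩ := h2
    have hxt : x = t := by
      have h0 : π • (t - x) = 0 := by
        have : π • t = π • x := hts
        rw [smul_sub, this, sub_self]
      have := hinj _ h0
      rw [sub_eq_zero] at this
      exact this.symm
    exact hxt ▸ ht
  · intro h
    have h2 : π • x ∈ Submodule.map (LinearMap.lsmul R V π) (Φ.F l) := ⟨x, h, rfl⟩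
    rw [← Φ.compat l] at h2
    exact h2.1

lemma DVRFil.ord_pi_smul (hinj : ∀ y : V, π • y = 0 → y = 0) (x : V) :
    Φ.ord (π • x) = 1 + Φ.ord x := by
  apply ereal_ext
  intro l
  rw [← Φ.mem_iff, show (l : ℝ) = (l - 1) + 1 by ring, Φ.pi_smul_mem hinj, Φ.mem_iff]
  induction Φ.ord x using EReal.rec with
  | bot =>
      simp only [EReal.add_bot, le_bot_iff]
      exact ⟨fun h => absurd h (EReal.coe_ne_bot _), fun h => absurd h (EReal.coe_ne_bot _)⟩
  | coe a =>
      rw [show (1 : EReal) + (a : EReal) = ((1 + a : ℝ) : EReal) by push_cast; ring]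
      rw [EReal.coe_le_coe_iff, EReal.coe_le_coe_iff]
      constructor <;> intro <;> linarith
  | top =>
      rw [EReal.add_top_of_ne_bot (by exact_mod_cast EReal.coe_ne_bot 1 : (1 : EReal) ≠ ⊥)]
      exact ⟨fun _ => le_top, fun _ => le_top⟩

lemma DVRFil.ord_unit_smul (u : Rˣ) (x : V) : Φ.ord ((u : R) • x) = Φ.ord x := by
  apply ereal_ext
  intro l
  rw [← Φ.mem_iff, ← Φ.mem_iff]
  constructor
  · intro h
    have := Submodule.smul_mem _ ((u⁻¹ : Rˣ) : R) h
    rwa [smul_smul, Units.inv_mul, one_smul] at this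
  · exact fun h => Submodule.smul_mem _ _ h

lemma DVRFil.ord_smul (hinj : ∀ y : V, π • y = 0 → y = 0) (u : Rˣ) (n : ℕ) (x : V) :
    Φ.ord (((u : R) * π ^ n) • x) = (n : EReal) + Φ.ord x := by
  rw [mul_smul, Φ.ord_unit_smul]
  induction n with
  | zero => simp
  | succ m ih =>
      rw [pow_succ, mul_comm, mul_smul, Φ.ord_pi_smul hinj, ih, ← add_assoc]
      congr 1
      rw [← EReal.coe_coe_eq_natCast, ← EReal.coe_coe_eq_natCast,
        show ((1 : EReal)) = ((1 : ℝ) : EReal) from rfl, ← EReal.coe_add]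
      norm_cast
      omega

end Aux


/-- Over a DVR `(R, π)`, a free basis `s_1, …, s_N` of a finite free module `V` satisfies
`ord_F(∑ a_i s_i) = min_i ord_F(a_i s_i)` for all `a_i ∈ R` iff
`F^λ V = ⨁_i π^{max{0, ⌈λ - ord_F(s_i)⌉}} R s_i` for all `λ ∈ ℝ`. -/
theorem stmt7 {R V : Type*} [CommRing R] [IsDomain R] [IsDiscreteValuationRing R]
    [AddCommGroup V] [Module R V] (π : R) (hπ : Irreducible π) {N : ℕ}
    (Φ : DVRFil R V π) (b : Module.Basis (Fin N) R V) :
    (∀ a : Fin N → R, Φ.ord (∑ i, a i • b i) = ⨅ i, Φ.ord (a i • b i))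
      ↔ ∀ l : ℝ, Φ.F l
        = ⨆ i, Submodule.span R {(π ^ (⌈l - (Φ.ord (b i)).toReal⌉).toNat) • b i} := by
  have hinj : ∀ y : V, π • y = 0 → y = 0 := by
    intro y hy
    have h1 : π • b.repr y = 0 := by
      rw [← map_smul, hy, map_zero]
    rcases smul_eq_zero.mp h1 with h | h
    · exact absurd h hπ.ne_zero
    · exact b.repr.map_eq_zero_iff.mp h
  -- ord of basis vectors is real
  have hbne : ∀ i : Fin N, (b i : V) ≠ 0 := fun i => b.ne_zero i
  have hord_ne_bot : ∀ x : V, Φ.ord x ≠ ⊥ := by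
    intro x
    obtain ⟨a, ha⟩ := Φ.exhaustive
    have : (a : EReal) ≤ Φ.ord x := (Φ.mem_iff x a).mp (ha ▸ Submodule.mem_top)
    exact fun h => by simp [h] at this
  have hord_ne_top : ∀ i : Fin N, Φ.ord (b i) ≠ ⊤ := by
    intro i htop
    have : b i ∈ ⨅ a : ℝ, Φ.F a := by
      rw [Submodule.mem_iInf]
      intro a
      rw [Φ.mem_iff]
      rw [htop]
      exact le_top
    rw [Φ.separated] at this
    exact hbne i this
  have hcoe : ∀ i : Fin N, ((Φ.ord (b i)).toReal : EReal) = Φ.ord (b i) :=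
    fun i => EReal.coe_toReal (hord_ne_top i) (hord_ne_bot (b i))
  -- key divisibility characterization
  have key : ∀ (l : ℝ) (i : Fin N) (a : R),
      ((l : EReal) ≤ Φ.ord (a • b i)
        ↔ π ^ (⌈l - (Φ.ord (b i)).toReal⌉).toNat ∣ a) := by
    intro l i a
    rcases eq_or_ne a 0 with rfl | ha
    · simp only [zero_smul, dvd_zero, iff_true]
      rw [← Φ.mem_iff]
      exact Submodule.zero_mem _
    · obtain ⟨n, u, rfl⟩ := IsDiscreteValuationRing.eq_unit_mul_pow_irreducible ha hπ
      rw [Φ.ord_smul hinj u n (b i)]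
      obtain ⟨r, hr⟩ : ∃ r : ℝ, Φ.ord (b i) = (r : EReal) := ⟨_, (hcoe i).symm⟩
      rw [hr]
      simp only [EReal.toReal_coe]
      rw [show ((n : ℕ) : EReal) + (r : EReal) = (((n : ℝ) + r : ℝ) : EReal) by
          rw [← EReal.coe_coe_eq_natCast, ← EReal.coe_add],
        EReal.coe_le_coe_iff]
      rw [(u.isUnit).dvd_mul_left, pow_dvd_pow_iff hπ.ne_zero hπ.not_isUnit, Int.toNat_le]
      constructor
      · intro h
        exact Int.ceil_le.mpr (by push_cast; linarith)
      · intro h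
        have := Int.ceil_le.mp h
        push_cast at this
        linarith
  -- membership of the supremum of spans
  have mem_sup : ∀ (c : Fin N → ℕ) (x : V),
      (x ∈ ⨆ i, Submodule.span R {(π ^ c i) • b i} ↔ ∀ i, π ^ c i ∣ b.repr x i) := by
    intro c x
    rw [show (⨆ i, Submodule.span R {(π ^ c i) • b i})
        = Submodule.span R (Set.range fun i => (π ^ c i) • b i) by
      rw [Submodule.span_range_eq_iSup]]
    rw [Submodule.mem_span_range_iff_exists_fun]
    constructor
    · rintro ⟨cf, hcf⟩ i
      have hco : b.repr x i = cf i * π ^ c i := by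
        rw [← hcf]
        simp_rw [smul_smul]
        rw [b.repr_sum_self]
      rw [hco]
      exact dvd_mul_left _ _
    · intro h
      choose cf hcf using h
      refine ⟨cf, ?_⟩
      have : ∀ i, cf i • ((π ^ c i) • b i) = b.repr x i • b i := by
        intro i
        rw [smul_smul, hcf i, mul_comm]
      rw [Finset.sum_congr rfl fun i _ => this i]
      exact b.sum_repr x
  constructor
  · intro H l
    ext x
    have hx : Φ.ord x = ⨅ i, Φ.ord (b.repr x i • b i) := by
      have := H fun i => b.repr x i
      rwa [b.sum_repr] at this
    rw [Φ.mem_iff, mem_sup, hx, le_iInf_iff]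
    exact forall_congr' fun i => key l i _
  · intro H a
    apply ereal_ext
    intro l
    rw [← Φ.mem_iff, H l, mem_sup, le_iInf_iff]
    refine forall_congr' fun i => ?_
    rw [key l i]
    rw [b.repr_sum_self]
end

section
/- Let $R$ be a DVR with uniformizer $\pi$ and residue field $\kappa$, $V$ a finite free $R$-module of rank $N$, and $F_1,\ldots,F_r$ $\frac{1}{d}\mathbb{Z}$-filtrations of $V$. Then the quotient of $\operatorname{Rees}_d(F_1,\ldots,F_r;V)$ by $(x_0,x_1,\ldots,x_r)\operatorname{Rees}_d(F_1,\ldots,F_r;V)$ is isomorphic as a graded $\kappa$-vector space to $\operatorname{gr}_{F_1,\ldots,F_r}(V) = \bigoplus_{\lambda} F^{\lambda}V / (F^{>\lambda}V + \pi F^{\lambda - (1,\ldots,1)}V)$, via the map sending the class of $s\,x^{-\lambda}$ in degree $\lambda$ to the class of $s$ in degree $\lambda/d$. -/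
section Rees

variable {R V : Type*} [CommRing R] [AddCommGroup V] [Module R V] {π : R} {r d : ℕ}

/-- `F^{λ/d} V = ⋂_j F_j^{λ_j/d} V` for `λ ∈ ℤ^r`. -/
noncomputable def Fmd (F : Fin r → DVRFil R V π) (d : ℕ) (lam : Fin r → ℤ) : Submodule R V :=
  ⨅ j, (F j).F ((lam j : ℝ) / d)

/-- `F^{>λ/d} V = ∑_{μ > λ} F^{μ/d} V`. -/
noncomputable def FmdGt (F : Fin r → DVRFil R V π) (d : ℕ) (lam : Fin r → ℤ) : Submodule R V :=
  ⨆ (mu : Fin r → ℤ) (_ : lam < mu), Fmd F d mu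

/-- `F^{>λ/d} V + π F^{λ/d - (1,…,1)} V`, the denominator of `gr^{λ/d}`. -/
noncomputable def grNumd (F : Fin r → DVRFil R V π) (d : ℕ) (lam : Fin r → ℤ) : Submodule R V :=
  FmdGt F d lam
    ⊔ Submodule.map (LinearMap.lsmul R V π) (Fmd F d (lam - fun _ => (d : ℤ)))

/-- The denominator viewed inside `F^{λ/d} V`. -/
noncomputable def grDend (F : Fin r → DVRFil R V π) (d : ℕ) (lam : Fin r → ℤ) :
    Submodule R ↥(Fmd F d lam) :=
  (grNumd F d lam).comap (Fmd F d lam).subtype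

/-- The graded piece `gr^{λ/d}(V) = F^{λ/d}V / (F^{>λ/d}V + πF^{λ/d-(1,…,1)}V)`. -/
abbrev grPd (F : Fin r → DVRFil R V π) (d : ℕ) (lam : Fin r → ℤ) :=
  ↥(Fmd F d lam) ⧸ grDend F d lam

/-- The `d`-th multigraded Rees module `Rees_d(F_1,…,F_r;V) = ⨁_{λ∈ℤ^r} F^{λ/d}V x^{-λ}`,
realized inside `V[x_1^{±1},…,x_r^{±1}] = (ℤ^r →₀ V)`. -/
noncomputable def Reesd (F : Fin r → DVRFil R V π) (d : ℕ) : Submodule R ((Fin r → ℤ) →₀ V) :=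
  ⨅ lam : Fin r → ℤ, Submodule.comap (Finsupp.lapply (M := V) (R := R) lam) (Fmd F d lam)

/-- Multiplication by `x_i` (`1 ≤ i ≤ r`): `x_i · s x^{-λ} = s x^{-(λ - e_i)}`. -/
noncomputable def xShift (i : Fin r) : ((Fin r → ℤ) →₀ V) →ₗ[R] ((Fin r → ℤ) →₀ V) :=
  Finsupp.lmapDomain V R (fun mu => mu - Pi.single i 1)

/-- Multiplication by `x_0`: `x_0 · s x^{-λ} = π s x^{-(λ + (d,…,d))}`. -/
noncomputable def x0Shift (π : R) (d : ℕ) :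
    ((Fin r → ℤ) →₀ V) →ₗ[R] ((Fin r → ℤ) →₀ V) :=
  π • Finsupp.lmapDomain V R (fun mu => mu + fun _ => (d : ℤ))

/-- The submodule `(x_0, x_1, …, x_r)·Rees_d(F_1,…,F_r;V)`. -/
noncomputable def XReesd (F : Fin r → DVRFil R V π) (d : ℕ) :
    Submodule R ((Fin r → ℤ) →₀ V) :=
  (⨆ i : Fin r, (Reesd F d).map (xShift i)) ⊔ (Reesd F d).map (x0Shift π d)

lemma single_mem_Reesd (F : Fin r → DVRFil R V π) (d : ℕ) (lam : Fin r → ℤ) (s : V)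
    (hs : s ∈ Fmd F d lam) : Finsupp.single lam s ∈ Reesd F d := by
  rw [Reesd, Submodule.mem_iInf]
  intro mu
  rw [Submodule.mem_comap]
  rcases eq_or_ne lam mu with h | h
  · subst h
    simpa [Finsupp.lapply_apply] using hs
  · simp [Finsupp.lapply_apply, Finsupp.single_apply, h]

end Rees

section Aux

variable {R V : Type*} [CommRing R] [AddCommGroup V] [Module R V] {π : R} {r d : ℕ}

lemma Fmd_antitone (F : Fin r → DVRFil R V π) (hd : 0 < d) {lam mu : Fin r → ℤ}
    (h : lam ≤ mu) : Fmd F d mu ≤ Fmd F d lam := by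
  refine iInf_mono fun j => (F j).mono ?_
  have hd' : (0 : ℝ) < d := by exact_mod_cast hd
  gcongr
  exact_mod_cast h j

lemma mem_Reesd_iff (F : Fin r → DVRFil R V π) (d : ℕ) {f : (Fin r → ℤ) →₀ V} :
    f ∈ Reesd F d ↔ ∀ lam : Fin r → ℤ, f lam ∈ Fmd F d lam := by
  rw [Reesd, Submodule.mem_iInf]
  exact forall_congr' fun lam => by rw [Submodule.mem_comap, Finsupp.lapply_apply]

lemma single_grNumd_mem (F : Fin r → DVRFil R V π) (hd : 0 < d) (lam : Fin r → ℤ) (b : V)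
    (hb : b ∈ grNumd F d lam) : Finsupp.single lam b ∈ XReesd F d := by
  rcases Submodule.mem_sup.mp hb with ⟨b1, hb1, b2, hb2, rfl⟩
  rw [Finsupp.single_add]
  refine add_mem ?_ ?_
  · rw [FmdGt, iSup_subtype'] at hb1
    refine Submodule.iSup_induction'
      (p := fun mu : {mu : Fin r → ℤ // lam < mu} => Fmd F d mu.1)
      (motive := fun x _ => Finsupp.single lam x ∈ XReesd F d)
      (fun mu x hx => ?_) (by simp) (fun x y _ _ hx hy => by
        show Finsupp.single lam (x + y) ∈ XReesd F d
        rw [Finsupp.single_add]; exact add_mem hx hy) hb1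
    · obtain ⟨hle, i, hi⟩ := Pi.lt_def.mp mu.2
      have hnu : lam + Pi.single i 1 ≤ mu.1 := by
        intro j
        rcases eq_or_ne j i with rfl | hne
        · simpa [Pi.single_eq_same] using Int.add_one_le_iff.mpr hi
        · simpa [Pi.single_eq_of_ne hne] using hle j
      have hx' : x ∈ Fmd F d (lam + Pi.single i 1) := Fmd_antitone F hd hnu hx
      have hkey : Finsupp.single lam x
          = xShift (R := R) i (Finsupp.single (lam + Pi.single i 1) x) := by
        simp [xShift, Finsupp.lmapDomain_apply, Finsupp.mapDomain_single]
      rw [hkey]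
      exact Submodule.mem_sup_left (Submodule.mem_iSup_of_mem i
        (Submodule.mem_map_of_mem (single_mem_Reesd F d _ x hx')))
  · rcases hb2 with ⟨c, hc, rfl⟩
    have hkey : Finsupp.single lam (LinearMap.lsmul R V π c)
        = x0Shift (r := r) π d (Finsupp.single (lam - fun _ => (d : ℤ)) c) := by
      simp [x0Shift, Finsupp.lmapDomain_apply, Finsupp.mapDomain_single,
        Finsupp.smul_single, LinearMap.lsmul_apply, sub_add_cancel]
    rw [hkey]
    exact Submodule.mem_sup_right
      (Submodule.mem_map_of_mem (single_mem_Reesd F d _ c hc))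

lemma XReesd_eq (F : Fin r → DVRFil R V π) (hd : 0 < d) :
    XReesd F d = ⨅ lam : Fin r → ℤ,
      Submodule.comap (Finsupp.lapply (M := V) (R := R) lam) (grNumd F d lam) := by
  apply le_antisymm
  · refine sup_le (iSup_le fun i => ?_) ?_
    · rintro _ ⟨f, hf, rfl⟩
      rw [Submodule.mem_iInf]
      intro lam
      rw [Submodule.mem_comap]
      have hval : (xShift (R := R) i f) (lam) = f (lam + Pi.single i 1) := by
        have hinj : Function.Injective (fun mu : Fin r → ℤ => mu - Pi.single i 1) :=
          sub_left_injective
        have := Finsupp.mapDomain_apply hinj f (lam + Pi.single i 1)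
        simpa [xShift, Finsupp.lmapDomain_apply, add_sub_cancel_right] using this
      rw [Finsupp.lapply_apply, hval]
      have h1 : f (lam + Pi.single i 1) ∈ Fmd F d (lam + Pi.single i 1) := by
        have hf' : f ∈ Reesd F d := hf
        rw [Reesd, Submodule.mem_iInf] at hf'
        simpa using hf' (lam + Pi.single i 1)
      have hlt : lam < lam + Pi.single i 1 := by
        rw [Pi.lt_def]
        constructor
        · intro j
          rcases eq_or_ne j i with rfl | hne
          · simp [Pi.single_eq_same]
          · simp [Pi.single_eq_of_ne hne]
        · exact ⟨i, by simp [Pi.single_eq_same]⟩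
      refine Submodule.mem_sup_left ?_
      exact Submodule.mem_iSup_of_mem (lam + Pi.single i 1)
        (Submodule.mem_iSup_of_mem hlt h1)
    · rintro _ ⟨f, hf, rfl⟩
      rw [Submodule.mem_iInf]
      intro lam
      rw [Submodule.mem_comap, Finsupp.lapply_apply]
      have hinj : Function.Injective (fun mu : Fin r → ℤ => mu + fun _ => (d : ℤ)) :=
        add_left_injective _
      have hval : (x0Shift (r := r) π d f) lam = π • f (lam - fun _ => (d : ℤ)) := by
        have := Finsupp.mapDomain_apply hinj f (lam - fun _ => (d : ℤ))
        simp only [x0Shift, LinearMap.smul_apply, Finsupp.lmapDomain_apply,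
          Finsupp.smul_apply]
        rw [show ((lam - fun _ => (d : ℤ)) + fun _ => (d : ℤ)) = lam by
          funext j; simp] at this
        rw [this]
      rw [hval]
      have h1 : f (lam - fun _ => (d : ℤ)) ∈ Fmd F d (lam - fun _ => (d : ℤ)) := by
        have hf' : f ∈ Reesd F d := hf
        rw [Reesd, Submodule.mem_iInf] at hf'
        simpa using hf' (lam - fun _ => (d : ℤ))
      exact Submodule.mem_sup_right ⟨f (lam - fun _ => (d : ℤ)), h1, rfl⟩
  · intro f hf
    rw [Submodule.mem_iInf] at hf
    have hrw : f = f.sum (fun lam b => Finsupp.single lam b) := (Finsupp.sum_single f).symm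
    rw [hrw]
    refine Submodule.finsuppSum_mem _ _ _ _ fun lam _ => ?_
    exact single_grNumd_mem F hd lam (f lam) (by simpa using hf lam)

noncomputable def compMap (F : Fin r → DVRFil R V π) (d : ℕ) (lam : Fin r → ℤ) :
    ↥(Reesd F d) →ₗ[R] ↥(Fmd F d lam) :=
  LinearMap.codRestrict (Fmd F d lam)
    ((Finsupp.lapply lam).comp (Reesd F d).subtype) (fun m => by
      simpa using (mem_Reesd_iff F d).mp m.2 lam)

@[simp] lemma compMap_coe (F : Fin r → DVRFil R V π) (d : ℕ) (lam : Fin r → ℤ)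
    (m : ↥(Reesd F d)) : (compMap F d lam m : V) = m.1 lam := rfl

noncomputable def mkComp (F : Fin r → DVRFil R V π) (d : ℕ) (lam : Fin r → ℤ) :
    ↥(Reesd F d) →ₗ[R] grPd F d lam :=
  (grDend F d lam).mkQ.comp (compMap F d lam)

noncomputable def termMap (F : Fin r → DVRFil R V π) (d : ℕ) (lam : Fin r → ℤ) :
    ↥(Reesd F d) →ₗ[R] DirectSum (Fin r → ℤ) fun lam => grPd F d lam :=
  (DirectSum.lof R (Fin r → ℤ) (fun lam => grPd F d lam) lam).comp (mkComp F d lam)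

lemma termMap_eq_zero (F : Fin r → DVRFil R V π) (d : ℕ) (lam : Fin r → ℤ)
    (m : ↥(Reesd F d)) (h : m.1 lam = 0) : termMap F d lam m = 0 := by
  have hc : compMap F d lam m = 0 := Subtype.ext (by simpa using h)
  simp [termMap, mkComp, hc]

lemma sum_term_subset (F : Fin r → DVRFil R V π) (d : ℕ) (m : ↥(Reesd F d))
    (S : Finset (Fin r → ℤ)) (hS : m.1.support ⊆ S) :
    (m.1.support.sum fun lam => termMap F d lam m) = S.sum fun lam => termMap F d lam m :=
  Finset.sum_subset hS fun lam _ hlam =>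
    termMap_eq_zero F d lam m (Finsupp.notMem_support_iff.mp hlam)

noncomputable def phi (F : Fin r → DVRFil R V π) (d : ℕ) :
    ↥(Reesd F d) →ₗ[R] DirectSum (Fin r → ℤ) fun lam => grPd F d lam where
  toFun m := m.1.support.sum fun lam => termMap F d lam m
  map_add' a b := by
    show (((a + b : ↥(Reesd F d)) : (Fin r → ℤ) →₀ V).support.sum
        fun lam => termMap F d lam (a + b))
      = (a.1.support.sum fun lam => termMap F d lam a)
        + (b.1.support.sum fun lam => termMap F d lam b)
    have hab : ((a + b : ↥(Reesd F d)) : (Fin r → ℤ) →₀ V).support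
        ⊆ a.1.support ∪ b.1.support := by
      rw [Submodule.coe_add]; exact Finsupp.support_add
    rw [sum_term_subset F d (a + b) _ hab,
      sum_term_subset F d a (a.1.support ∪ b.1.support) Finset.subset_union_left,
      sum_term_subset F d b (a.1.support ∪ b.1.support) Finset.subset_union_right,
      ← Finset.sum_add_distrib]
    exact Finset.sum_congr rfl fun lam _ => map_add _ _ _
  map_smul' c a := by
    show (((c • a : ↥(Reesd F d)) : (Fin r → ℤ) →₀ V).support.sum
        fun lam => termMap F d lam (c • a))
      = c • (a.1.support.sum fun lam => termMap F d lam a)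
    have hca : ((c • a : ↥(Reesd F d)) : (Fin r → ℤ) →₀ V).support ⊆ a.1.support := by
      rw [Submodule.coe_smul]; exact Finsupp.support_smul
    rw [sum_term_subset F d (c • a) _ hca, Finset.smul_sum]
    exact Finset.sum_congr rfl fun lam _ => map_smul _ _ _

lemma phi_single (F : Fin r → DVRFil R V π) (d : ℕ) (lam : Fin r → ℤ) (s : V)
    (hs : s ∈ Fmd F d lam) :
    phi F d ⟨Finsupp.single lam s, single_mem_Reesd F d lam s hs⟩
      = DirectSum.lof R (Fin r → ℤ) (fun lam => grPd F d lam) lam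
          (Submodule.Quotient.mk ⟨s, hs⟩) := by
  have h1 : phi F d ⟨Finsupp.single lam s, single_mem_Reesd F d lam s hs⟩
      = ∑ mu ∈ ({lam} : Finset (Fin r → ℤ)),
          termMap F d mu ⟨Finsupp.single lam s, single_mem_Reesd F d lam s hs⟩ :=
    sum_term_subset F d _ {lam} Finsupp.support_single_subset
  rw [h1, Finset.sum_singleton]
  have hc : compMap F d lam ⟨Finsupp.single lam s, single_mem_Reesd F d lam s hs⟩
      = ⟨s, hs⟩ := Subtype.ext (by simp)
  simp [termMap, mkComp, hc]

lemma ker_phi (F : Fin r → DVRFil R V π) (hd : 0 < d) :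
    Submodule.comap (Reesd F d).subtype (XReesd F d) ≤ LinearMap.ker (phi F d) := by
  intro m hm
  rw [LinearMap.mem_ker]
  show m.1.support.sum _ = 0
  refine Finset.sum_eq_zero fun lam _ => ?_
  have hmem : m.1 lam ∈ grNumd F d lam := by
    have h1 : m.1 ∈ XReesd F d := hm
    rw [XReesd_eq F hd, Submodule.mem_iInf] at h1
    simpa using h1 lam
  have h2 : compMap F d lam m ∈ grDend F d lam := by
    rw [grDend, Submodule.mem_comap]
    simpa using hmem
  simp [termMap, mkComp, (Submodule.Quotient.mk_eq_zero _).mpr h2]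

noncomputable def toRees (F : Fin r → DVRFil R V π) (d : ℕ) (lam : Fin r → ℤ) :
    ↥(Fmd F d lam) →ₗ[R] ↥(Reesd F d) :=
  LinearMap.codRestrict (Reesd F d) ((Finsupp.lsingle lam).comp (Fmd F d lam).subtype)
    (fun s => single_mem_Reesd F d lam s.1 s.2)

noncomputable def gComp (F : Fin r → DVRFil R V π) (hd : 0 < d) (lam : Fin r → ℤ) :
    grPd F d lam →ₗ[R]
      ↥(Reesd F d) ⧸ Submodule.comap (Reesd F d).subtype (XReesd F d) :=
  Submodule.liftQ _
    ((Submodule.comap (Reesd F d).subtype (XReesd F d)).mkQ.comp (toRees F d lam))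
    (fun x hx => by
      rw [LinearMap.mem_ker, LinearMap.comp_apply, Submodule.mkQ_apply,
        Submodule.Quotient.mk_eq_zero, Submodule.mem_comap]
      exact single_grNumd_mem F hd lam x.1 hx)

noncomputable def gmap (F : Fin r → DVRFil R V π) (hd : 0 < d) :
    (DirectSum (Fin r → ℤ) fun lam => grPd F d lam) →ₗ[R]
      ↥(Reesd F d) ⧸ Submodule.comap (Reesd F d).subtype (XReesd F d) :=
  DirectSum.toModule R (Fin r → ℤ) _ (fun lam => gComp F hd lam)

end Aux

/-- For `(1/d)ℤ`-filtrations `F_1, …, F_r` of a finite free module `V` over a DVR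
`(R, π)`, the quotient of the `d`-th multigraded Rees module by
`(x_0, x_1, …, x_r)·Rees_d(F_1,…,F_r;V)` is isomorphic as a graded module (a vector space
over the residue field `κ = R/(π)`) to
`gr_{F_1,…,F_r}(V) = ⨁_λ F^{λ/d}V / (F^{>λ/d}V + πF^{λ/d-(1,…,1)}V)`, via the map sending
the class of `s x^{-λ}` in degree `λ` to the class of `s` in degree `λ/d`. -/
theorem stmt9 {R V : Type*} [CommRing R] [IsDomain R] [IsDiscreteValuationRing R]
    [AddCommGroup V] [Module R V] [Module.Free R V] [Module.Finite R V]
    (π : R) (hπ : Irreducible π) {r d : ℕ} (hd : 0 < d)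
    (F : Fin r → DVRFil R V π)
    (hfrac : ∀ (j : Fin r) (a : ℝ), (F j).F ((⌈a * d⌉ : ℤ) / (d : ℝ)) = (F j).F a) :
    ∃ e : (↥(Reesd F d) ⧸ (Submodule.comap (Reesd F d).subtype (XReesd F d))) ≃ₗ[R]
        (DirectSum (Fin r → ℤ) fun lam => grPd F d lam),
      ∀ (lam : Fin r → ℤ) (s : V) (hs : s ∈ Fmd F d lam),
        e (Submodule.Quotient.mk (p := Submodule.comap (Reesd F d).subtype (XReesd F d))
            ⟨Finsupp.single lam s, single_mem_Reesd F d lam s hs⟩)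
          = DirectSum.of (fun lam => grPd F d lam) lam
              (Submodule.Quotient.mk (p := grDend F d lam) ⟨s, hs⟩) := by
  classical
  refine ⟨LinearEquiv.ofLinear
      (Submodule.liftQ _ (M₂ := DirectSum (Fin r → ℤ) fun lam => grPd F d lam) (phi F d) (ker_phi F hd)) (gmap F hd) ?_ ?_, ?_⟩
  · -- liftQ ∘ gmap = id
    refine DirectSum.linearMap_ext _ fun lam => ?_
    refine Submodule.linearMap_qext (grDend F d lam) (M₂ := DirectSum (Fin r → ℤ) fun lam => grPd F d lam)
      (LinearMap.ext fun x => ?_)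
    simp only [LinearMap.comp_apply, Submodule.mkQ_apply, LinearMap.id_apply, gmap,
      DirectSum.toModule_lof, gComp, Submodule.liftQ_apply]
    exact phi_single F d lam x.1 x.2
  · -- gmap ∘ liftQ = id
    refine Submodule.linearMap_qext _ (LinearMap.ext fun m => ?_)
    simp only [LinearMap.comp_apply, Submodule.mkQ_apply, LinearMap.id_apply,
      Submodule.liftQ_apply]
    have hphi : phi F d m = ∑ lam ∈ m.1.support, termMap F d lam m := rfl
    rw [hphi, map_sum]
    have hterm : ∀ lam ∈ m.1.support, gmap F hd (termMap F d lam m)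
        = (Submodule.comap (Reesd F d).subtype (XReesd F d)).mkQ
            (toRees F d lam (compMap F d lam m)) := fun lam _ => by
      simp only [termMap, LinearMap.comp_apply, gmap, DirectSum.toModule_lof, gComp, mkComp,
        Submodule.mkQ_apply, Submodule.liftQ_apply]
    rw [Finset.sum_congr rfl hterm, ← map_sum]
    refine congrArg _ (Subtype.ext ?_)
    rw [AddSubmonoidClass.coe_finset_sum]
    have hm := Finsupp.sum_single (m : (Fin r → ℤ) →₀ V)
    rw [Finsupp.sum] at hm
    exact (Finset.sum_congr rfl fun lam _ => rfl).trans hm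
  · intro lam s hs
    rw [LinearEquiv.ofLinear_apply, Submodule.liftQ_apply]
    exact phi_single F d lam s hs
end

section
/- Let $k$ be a field, $d, r \ge 1$ integers, and consider the ring $\widetilde{A} = R[x_0,\ldots,x_r]/(x_0 x_1 \cdots x_r - \pi^{1/d})$ over $\widetilde{R} = R[\pi^{1/d}]$, with the $\mu_d$-action fixing $R[x_1,\ldots,x_r]$, acting with weight $1$ on $x_0$, and acting on $\pi^{i/d}$ with weight $i$. Then the invariant ring satisfies $\widetilde{A}^{\mu_d} \cong R[y_0, x_1,\ldots,x_r]/(y_0 x_1^d \cdots x_r^d - \pi)$, where $y_0$ corresponds to $x_0^d$. -/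
/-- The subalgebra of fixed points of an algebra automorphism. -/
def fixedSubalgebra {R A : Type*} [CommSemiring R] [CommSemiring A] [Algebra R A]
    (σ : A ≃ₐ[R] A) : Subalgebra R A where
  carrier := {a | σ a = a}
  mul_mem' := fun {a b} ha hb => by
    simp only [Set.mem_setOf_eq, map_mul] at *
    rw [ha, hb]
  add_mem' := fun {a b} ha hb => by
    simp only [Set.mem_setOf_eq, map_add] at *
    rw [ha, hb]
  algebraMap_mem' := fun r => by
    simp only [Set.mem_setOf_eq, AlgEquiv.commutes]

section

variable (R : Type*) [CommRing R]

/-- `R̃ = R[π^{1/d}] = R[x]/(x^d - π)`. -/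
abbrev RTilde (π : R) (d : ℕ) : Type _ := AdjoinRoot (Polynomial.X ^ d - Polynomial.C π)

/-- `Ã = R̃[x_0, …, x_r]/(x_0 x_1 ⋯ x_r - π^{1/d})`. -/
abbrev ATilde (π : R) (d r : ℕ) : Type _ :=
  MvPolynomial (Fin (r + 1)) (RTilde R π d)
    ⧸ Ideal.span {(∏ i : Fin (r + 1), MvPolynomial.X i)
        - MvPolynomial.C (AdjoinRoot.root (Polynomial.X ^ d - Polynomial.C π))}

/-- `R[y_0, x_1, …, x_r]/(y_0 x_1^d ⋯ x_r^d - π)`, where `y_0` is the variable `X 0`. -/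
abbrev TargetRing (π : R) (d r : ℕ) : Type _ :=
  MvPolynomial (Fin (r + 1)) R
    ⧸ Ideal.span {MvPolynomial.X 0 * (∏ i : Fin r, MvPolynomial.X i.succ ^ d)
        - MvPolynomial.C π}

/-- The defining properties of a generator `σ` of the `μ_d`-action on `Ã`: it fixes
`x_1, …, x_r` and multiplies both `x_0` and `π^{1/d}` by `ζ`. -/
def muActionGen (π : R) (d r : ℕ) (ζ : R) (σ : ATilde R π d r ≃ₐ[R] ATilde R π d r) :
    Prop :=
  σ (Ideal.Quotient.mk _ (MvPolynomial.X 0))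
      = algebraMap R (ATilde R π d r) ζ * Ideal.Quotient.mk _ (MvPolynomial.X 0)
  ∧ (∀ i : Fin r, σ (Ideal.Quotient.mk _ (MvPolynomial.X i.succ))
      = Ideal.Quotient.mk _ (MvPolynomial.X i.succ))
  ∧ σ (Ideal.Quotient.mk _ (MvPolynomial.C
        (AdjoinRoot.root (Polynomial.X ^ d - Polynomial.C π))))
      = algebraMap R (ATilde R π d r) ζ
        * Ideal.Quotient.mk _ (MvPolynomial.C
            (AdjoinRoot.root (Polynomial.X ^ d - Polynomial.C π)))

end

noncomputable section Stmt14Aux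

open MvPolynomial

namespace Stmt14

variable {R : Type*} [CommRing R] (π : R) (d r : ℕ)

abbrev tt : RTilde R π d := AdjoinRoot.root (Polynomial.X ^ d - Polynomial.C π)

abbrev qA : MvPolynomial (Fin (r + 1)) (RTilde R π d) →+* ATilde R π d r :=
  Ideal.Quotient.mk _

lemma tt_pow : tt π d ^ d = algebraMap R _ π := by
  have h : AdjoinRoot.mk (Polynomial.X ^ d - Polynomial.C π)
      (Polynomial.X ^ d - Polynomial.C π) = 0 := AdjoinRoot.mk_self
  rw [map_sub, map_pow, AdjoinRoot.mk_X, AdjoinRoot.mk_C, sub_eq_zero] at h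
  rw [h, AdjoinRoot.algebraMap_eq]

lemma qA_C_tt : qA π d r (MvPolynomial.C (tt π d)) = ∏ i, qA π d r (MvPolynomial.X i) := by
  have h : qA π d r ((∏ i : Fin (r + 1), MvPolynomial.X i) - MvPolynomial.C (tt π d)) = 0 :=
    Ideal.Quotient.eq_zero_iff_mem.mpr (Ideal.subset_span (Set.mem_singleton _))
  rw [map_sub, sub_eq_zero, map_prod] at h
  exact h.symm




/-- model ring `A = R[x_0,…,x_r]/((x_0⋯x_r)^d - π)` -/
abbrev MR : Type _ := MvPolynomial (Fin (r + 1)) R ⧸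
  Ideal.span {(∏ i : Fin (r + 1), MvPolynomial.X i) ^ d - MvPolynomial.C π}

abbrev qM : MvPolynomial (Fin (r + 1)) R →ₐ[R] MR π d r := Ideal.Quotient.mkₐ R _

lemma qM_rel : (∏ i, qM π d r (MvPolynomial.X i)) ^ d = algebraMap R (MR π d r) π := by
  have h : qM π d r ((∏ i : Fin (r + 1), MvPolynomial.X i) ^ d - MvPolynomial.C π) = 0 := by
    simp only [qM, Ideal.Quotient.mkₐ_eq_mk]
    exact Ideal.Quotient.eq_zero_iff_mem.mpr (Ideal.subset_span (Set.mem_singleton _))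
  rw [map_sub, sub_eq_zero, map_pow, map_prod] at h
  rw [h]
  simp [qM]

/-- lift out of `MvPolynomial (Fin (r+1)) (RTilde R π d)` as `R`-algebra hom -/
def mvLift {S : Type*} [CommRing S] [Algebra R S] (f : RTilde R π d →ₐ[R] S)
    (v : Fin (r + 1) → S) : MvPolynomial (Fin (r + 1)) (RTilde R π d) →ₐ[R] S :=
  { MvPolynomial.eval₂Hom (f : RTilde R π d →+* S) v with
    commutes' := fun s => by
      have : (algebraMap R (MvPolynomial (Fin (r + 1)) (RTilde R π d))) s
          = MvPolynomial.C (algebraMap R (RTilde R π d) s) := rfl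
      simp only [this, RingHom.toMonoidHom_eq_coe, OneHom.toFun_eq_coe, MonoidHom.toOneHom_coe,
        MonoidHom.coe_coe, coe_eval₂Hom, eval₂_C]
      exact f.commutes s }

@[simp] lemma mvLift_X {S : Type*} [CommRing S] [Algebra R S] (f : RTilde R π d →ₐ[R] S)
    (v : Fin (r + 1) → S) (i) : mvLift π d r f v (MvPolynomial.X i) = v i := by
  simp [mvLift]

@[simp] lemma mvLift_C {S : Type*} [CommRing S] [Algebra R S] (f : RTilde R π d →ₐ[R] S)
    (v : Fin (r + 1) → S) (x) : mvLift π d r f v (MvPolynomial.C x) = f x := by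
  simp [mvLift]

/-- lift out of `ATilde` -/
def aLift {S : Type*} [CommRing S] [Algebra R S] (tv : S) (htv : tv ^ d = algebraMap R S π)
    (v : Fin (r + 1) → S) (hv : (∏ i, v i) = tv) : ATilde R π d r →ₐ[R] S :=
  Ideal.Quotient.liftₐ _
    (mvLift π d r (AdjoinRoot.liftAlgHom _ (Algebra.ofId R S) tv (by
      simp [Polynomial.aeval_def, htv])) v)
    (by
      intro a ha
      have hle : Ideal.span {(∏ i : Fin (r + 1), MvPolynomial.X i)
          - MvPolynomial.C (tt π d)} ≤ RingHom.ker (mvLift π d r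
            (AdjoinRoot.liftAlgHom _ (Algebra.ofId R S) tv (by simp [Polynomial.aeval_def, htv])) v) := by
        refine Ideal.span_le.mpr ?_
        rintro x rfl
        simp only [SetLike.mem_coe, RingHom.mem_ker, map_sub, map_prod, mvLift_X, mvLift_C,
          AdjoinRoot.liftAlgHom_root, hv, sub_self]
      exact RingHom.mem_ker.mp (hle ha))

@[simp] lemma aLift_X {S : Type*} [CommRing S] [Algebra R S] (tv : S)
    (htv : tv ^ d = algebraMap R S π) (v : Fin (r + 1) → S) (hv : (∏ i, v i) = tv) (i) :
    aLift π d r tv htv v hv (qA π d r (MvPolynomial.X i)) = v i := by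
  simp [aLift, qA]
  erw [Ideal.Quotient.lift_mk]
  simp

@[simp] lemma aLift_C_tt {S : Type*} [CommRing S] [Algebra R S] (tv : S)
    (htv : tv ^ d = algebraMap R S π) (v : Fin (r + 1) → S) (hv : (∏ i, v i) = tv) :
    aLift π d r tv htv v hv (qA π d r (MvPolynomial.C (tt π d))) = tv := by
  simp [aLift, qA]
  erw [Ideal.Quotient.lift_mk]
  simp

/-- `Ã → A` -/
def toM : ATilde R π d r →ₐ[R] MR π d r :=
  aLift π d r (∏ i, qM π d r (MvPolynomial.X i)) (qM_rel π d r)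
    (fun i => qM π d r (MvPolynomial.X i)) rfl

/-- `A → Ã` -/
def toA : MR π d r →ₐ[R] ATilde R π d r :=
  Ideal.Quotient.liftₐ _
    (MvPolynomial.aeval (fun i => qA π d r (MvPolynomial.X i)))
    (by
      intro a ha
      have hle : Ideal.span {(∏ i : Fin (r + 1), MvPolynomial.X i) ^ d - MvPolynomial.C π}
          ≤ RingHom.ker (MvPolynomial.aeval (R := R)
              (fun i => qA π d r (MvPolynomial.X i))) := by
        refine Ideal.span_le.mpr ?_
        rintro x rfl
        have h1 : (∏ i, qA π d r (MvPolynomial.X i)) ^ d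
            = algebraMap R (ATilde R π d r) π := by
          rw [← qA_C_tt, ← map_pow, ← map_pow, tt_pow]
          rfl
        simp only [SetLike.mem_coe, RingHom.mem_ker, map_sub, map_pow, map_prod, aeval_X, h1]
        simp [sub_self]
      exact RingHom.mem_ker.mp (hle ha))

@[simp] lemma toM_X (i) : toM π d r (qA π d r (MvPolynomial.X i))
    = qM π d r (MvPolynomial.X i) := by simp [toM]

@[simp] lemma toM_C_tt : toM π d r (qA π d r (MvPolynomial.C (tt π d)))
    = ∏ i, qM π d r (MvPolynomial.X i) := by simp [toM]

@[simp] lemma toA_X (i) : toA π d r (Ideal.Quotient.mk _ (MvPolynomial.X i))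
    = qA π d r (MvPolynomial.X i) := by
  show toA π d r (qM π d r (MvPolynomial.X i)) = _
  simp [toA, qM]
  erw [Ideal.Quotient.lift_mk]
  simp

lemma toA_toM : (toA π d r).comp (toM π d r) = AlgHom.id R _ := by
  apply Ideal.Quotient.algHom_ext
  apply MvPolynomial.algHom_ext'
  · apply AdjoinRoot.algHom_ext
    show toA π d r (toM π d r (qA π d r (MvPolynomial.C (tt π d))))
      = qA π d r (MvPolynomial.C (tt π d))
    rw [toM_C_tt, map_prod]
    simp only [Ideal.Quotient.mkₐ_eq_mk, toA_X]
    exact (qA_C_tt π d r).symm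
  · intro i
    show toA π d r (toM π d r (qA π d r (MvPolynomial.X i))) = qA π d r (MvPolynomial.X i)
    rw [toM_X]
    exact toA_X π d r i

lemma toM_toA : (toM π d r).comp (toA π d r) = AlgHom.id R _ := by
  apply Ideal.Quotient.algHom_ext
  apply MvPolynomial.algHom_ext
  intro i
  show toM π d r (toA π d r (qM π d r (MvPolynomial.X i))) = qM π d r (MvPolynomial.X i)
  rw [show (qM π d r (MvPolynomial.X i)) = Ideal.Quotient.mk _ (MvPolynomial.X i) from rfl,
    toA_X]
  exact toM_X π d r i


/-- the isomorphism `Ã ≃ A` -/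
def ΦA : ATilde R π d r ≃ₐ[R] MR π d r :=
  AlgEquiv.ofAlgHom (toM π d r) (toA π d r) (toM_toA π d r) (toA_toM π d r)

section Sigma
variable (hd : 0 < d) (ζ : R) (hζd : ζ ^ d = 1)

lemma qA_C_tt_pow : qA π d r (MvPolynomial.C (tt π d)) ^ d = algebraMap R (ATilde R π d r) π := by
  rw [← map_pow, ← map_pow, tt_pow]; rfl

/-- generator of the `μ_d`-action on `Ã`, as an algebra hom -/
def sigmaHom : ATilde R π d r →ₐ[R] ATilde R π d r :=
  aLift π d r (algebraMap R _ ζ * qA π d r (MvPolynomial.C (tt π d)))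
    (by rw [mul_pow, ← map_pow, hζd, map_one, one_mul, qA_C_tt_pow])
    (Fin.cases (algebraMap R _ ζ * qA π d r (MvPolynomial.X 0))
      (fun j => qA π d r (MvPolynomial.X j.succ)))
    (by
      rw [Fin.prod_univ_succ]
      simp only [Fin.cases_zero, Fin.cases_succ]
      rw [mul_assoc, qA_C_tt]
      congr 1
      exact (Fin.prod_univ_succ (fun i => qA π d r (MvPolynomial.X i))).symm)

@[simp] lemma sigmaHom_X0 :
    sigmaHom π d r ζ hζd (qA π d r (MvPolynomial.X 0))
      = algebraMap R _ ζ * qA π d r (MvPolynomial.X 0) := by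
  rw [sigmaHom, aLift_X]
  simp

@[simp] lemma sigmaHom_Xsucc (j : Fin r) :
    sigmaHom π d r ζ hζd (qA π d r (MvPolynomial.X j.succ))
      = qA π d r (MvPolynomial.X j.succ) := by
  rw [sigmaHom, aLift_X]
  simp

@[simp] lemma sigmaHom_C_tt :
    sigmaHom π d r ζ hζd (qA π d r (MvPolynomial.C (tt π d)))
      = algebraMap R _ ζ * qA π d r (MvPolynomial.C (tt π d)) := by
  rw [sigmaHom, aLift_C_tt]

lemma sigmaHom_comp {ζ' : R} (hζd' : ζ' ^ d = 1) (hζζ' : ζ * ζ' = 1) :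
    (sigmaHom π d r ζ' hζd').comp (sigmaHom π d r ζ hζd) = AlgHom.id R _ := by
  apply Ideal.Quotient.algHom_ext
  apply MvPolynomial.algHom_ext'
  · apply AdjoinRoot.algHom_ext
    show sigmaHom π d r ζ' hζd' (sigmaHom π d r ζ hζd (qA π d r (MvPolynomial.C (tt π d))))
      = qA π d r (MvPolynomial.C (tt π d))
    rw [sigmaHom_C_tt, map_mul, AlgHom.commutes, sigmaHom_C_tt, ← mul_assoc, ← map_mul,
      hζζ', map_one, one_mul]
  · intro i
    show sigmaHom π d r ζ' hζd' (sigmaHom π d r ζ hζd (qA π d r (MvPolynomial.X i)))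
      = qA π d r (MvPolynomial.X i)
    induction i using Fin.cases with
    | zero =>
      rw [sigmaHom_X0, map_mul, AlgHom.commutes, sigmaHom_X0, ← mul_assoc, ← map_mul,
        hζζ', map_one, one_mul]
    | succ j => rw [sigmaHom_Xsucc, sigmaHom_Xsucc]

/-- the `μ_d`-action generator on `Ã` -/
def sigma : ATilde R π d r ≃ₐ[R] ATilde R π d r :=
  AlgEquiv.ofAlgHom (sigmaHom π d r ζ hζd)
    (sigmaHom π d r (ζ ^ (d - 1)) (by rw [← pow_mul, mul_comm, pow_mul, hζd, one_pow]))
    (by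
      apply sigmaHom_comp
      rw [← pow_succ, Nat.sub_add_cancel hd, hζd])
    (by
      apply sigmaHom_comp
      rw [← pow_succ', Nat.sub_add_cancel hd, hζd])

end Sigma

section Beta

abbrev qT : MvPolynomial (Fin (r + 1)) R →ₐ[R] TargetRing R π d r := Ideal.Quotient.mkₐ R _

lemma qT_rel : (Ideal.Quotient.mk _ (MvPolynomial.X 0) : TargetRing R π d r)
      * (∏ i : Fin r, (Ideal.Quotient.mk _ (MvPolynomial.X i.succ) : TargetRing R π d r) ^ d)
    = algebraMap R (TargetRing R π d r) π := by
  show qT π d r (MvPolynomial.X 0) * (∏ i : Fin r, qT π d r (MvPolynomial.X i.succ) ^ d)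
    = algebraMap R (TargetRing R π d r) π
  have h : qT π d r (MvPolynomial.X 0 * (∏ i : Fin r, MvPolynomial.X i.succ ^ d)
      - MvPolynomial.C π) = 0 := by
    simp only [qT, Ideal.Quotient.mkₐ_eq_mk]
    exact Ideal.Quotient.eq_zero_iff_mem.mpr (Ideal.subset_span (Set.mem_singleton _))
  rw [map_sub, sub_eq_zero, map_mul, map_prod] at h
  simp only [map_pow] at h
  rw [h]
  simp [qT]

/-- the map `B = R[y_0,x_1,…,x_r]/(y_0 x_1^d ⋯ x_r^d - π) → A`, `y_0 ↦ x_0^d`. -/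
def beta : TargetRing R π d r →ₐ[R] MR π d r :=
  Ideal.Quotient.liftₐ _
    (MvPolynomial.aeval (Fin.cases (qM π d r (MvPolynomial.X 0) ^ d)
      (fun j => qM π d r (MvPolynomial.X j.succ))))
    (by
      intro a ha
      have hle : Ideal.span {MvPolynomial.X 0 * (∏ i : Fin r, MvPolynomial.X i.succ ^ d)
          - MvPolynomial.C π} ≤ RingHom.ker (MvPolynomial.aeval (R := R)
            (Fin.cases (qM π d r (MvPolynomial.X 0) ^ d)
              (fun j => qM π d r (MvPolynomial.X j.succ)))) := by
        refine Ideal.span_le.mpr ?_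
        rintro x rfl
        simp only [SetLike.mem_coe, RingHom.mem_ker, map_sub, map_mul, map_prod, map_pow,
          aeval_X, Fin.cases_zero, Fin.cases_succ, aeval_C]
        rw [sub_eq_zero, ← qM_rel π d r, Finset.prod_pow, ← mul_pow]
        congr 1
        exact (Fin.prod_univ_succ (fun i => qM π d r (MvPolynomial.X i))).symm
      exact RingHom.mem_ker.mp (hle ha))

@[simp] lemma beta_X0 : beta π d r (Ideal.Quotient.mk _ (MvPolynomial.X 0))
    = qM π d r (MvPolynomial.X 0) ^ d := by
  show beta π d r (qT π d r (MvPolynomial.X 0)) = _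
  simp [beta, qT]
  erw [Ideal.Quotient.lift_mk]
  simp

@[simp] lemma beta_Xsucc (j : Fin r) : beta π d r (Ideal.Quotient.mk _ (MvPolynomial.X j.succ))
    = qM π d r (MvPolynomial.X j.succ) := by
  show beta π d r (qT π d r (MvPolynomial.X j.succ)) = _
  simp [beta, qT]
  erw [Ideal.Quotient.lift_mk]
  simp

/-- `B[z]/(z^d - y_0)` -/
abbrev ARoot : Type _ := AdjoinRoot
  ((Polynomial.X : Polynomial (TargetRing R π d r)) ^ d
    - Polynomial.C (Ideal.Quotient.mk _ (MvPolynomial.X 0)))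

lemma aroot_pow : (AdjoinRoot.root _ : ARoot π d r) ^ d
    = algebraMap (TargetRing R π d r) (ARoot π d r) (Ideal.Quotient.mk _ (MvPolynomial.X 0)) := by
  have h : AdjoinRoot.mk _ ((Polynomial.X : Polynomial (TargetRing R π d r)) ^ d
      - Polynomial.C (Ideal.Quotient.mk _ (MvPolynomial.X 0))) = (0 : ARoot π d r) :=
    AdjoinRoot.mk_self
  rw [map_sub, map_pow, AdjoinRoot.mk_X, AdjoinRoot.mk_C, sub_eq_zero] at h
  rw [h, AdjoinRoot.algebraMap_eq]

instance : IsScalarTower R (TargetRing R π d r) (ARoot π d r) :=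
  IsScalarTower.of_algebraMap_eq fun x =>
    show algebraMap R (ARoot π d r) x
        = algebraMap (TargetRing R π d r) (ARoot π d r) (algebraMap R (TargetRing R π d r) x) by
      rw [AdjoinRoot.algebraMap_eq', AdjoinRoot.algebraMap_eq]
      rfl

/-- `A → B[z]/(z^d - y_0)`, `x_0 ↦ z`, `x_i ↦ x_i`. -/
def theta : MR π d r →ₐ[R] ARoot π d r :=
  Ideal.Quotient.liftₐ _
    (MvPolynomial.aeval (Fin.cases (AdjoinRoot.root _)
      (fun j => algebraMap (TargetRing R π d r) (ARoot π d r)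
        (Ideal.Quotient.mk _ (MvPolynomial.X j.succ)))))
    (by
      intro a ha
      have hle : Ideal.span {(∏ i : Fin (r + 1), MvPolynomial.X i) ^ d - MvPolynomial.C π}
          ≤ RingHom.ker (MvPolynomial.aeval (R := R)
            (Fin.cases (AdjoinRoot.root _)
              (fun j => algebraMap (TargetRing R π d r) (ARoot π d r)
                (Ideal.Quotient.mk _ (MvPolynomial.X j.succ))))) := by
        refine Ideal.span_le.mpr ?_
        rintro x rfl
        simp only [SetLike.mem_coe, RingHom.mem_ker, map_sub, map_pow, map_prod, aeval_X,
          aeval_C]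
        rw [sub_eq_zero, Fin.prod_univ_succ]
        simp only [Fin.cases_zero, Fin.cases_succ]
        rw [mul_pow, aroot_pow, ← map_prod, ← map_pow, ← map_mul, ← Finset.prod_pow,
          qT_rel, ← IsScalarTower.algebraMap_apply]
      exact RingHom.mem_ker.mp (hle ha))

lemma theta_beta : (theta π d r).comp (beta π d r)
    = IsScalarTower.toAlgHom R (TargetRing R π d r) (ARoot π d r) := by
  apply Ideal.Quotient.algHom_ext
  apply MvPolynomial.algHom_ext
  intro i
  show theta π d r (beta π d r (Ideal.Quotient.mk _ (MvPolynomial.X i)))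
    = algebraMap (TargetRing R π d r) (ARoot π d r) (Ideal.Quotient.mk _ (MvPolynomial.X i))
  induction i using Fin.cases with
  | zero =>
    rw [beta_X0, map_pow,
      show theta π d r (qM π d r (MvPolynomial.X 0)) = AdjoinRoot.root _ by simp [theta, qM]; erw [Ideal.Quotient.lift_mk]; simp,
      aroot_pow]
  | succ j =>
    rw [beta_Xsucc]
    simp [theta, qM]
    erw [Ideal.Quotient.lift_mk]
    simp

lemma beta_injective (hd : 0 < d) : Function.Injective (beta π d r) := by
  have halg : Function.Injective
      (algebraMap (TargetRing R π d r) (ARoot π d r)) := by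
    rcases subsingleton_or_nontrivial (TargetRing R π d r) with hs | hn
    · exact fun a b _ => Subsingleton.elim a b
    have hmonic : ((Polynomial.X : Polynomial (TargetRing R π d r)) ^ d
        - Polynomial.C (Ideal.Quotient.mk _ (MvPolynomial.X 0))).Monic :=
      Polynomial.monic_X_pow_sub_C _ hd.ne'
    have key : ∀ x : TargetRing R π d r,
        AdjoinRoot.modByMonicHom hmonic (algebraMap _ (ARoot π d r) x) = Polynomial.C x := by
      intro x
      rw [AdjoinRoot.algebraMap_eq]
      show AdjoinRoot.modByMonicHom hmonic (AdjoinRoot.mk _ (Polynomial.C x)) = _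
      rw [AdjoinRoot.modByMonicHom_mk]
      refine (Polynomial.modByMonic_eq_self_iff hmonic).mpr ?_
      refine lt_of_le_of_lt Polynomial.degree_C_le ?_
      rw [Polynomial.degree_X_pow_sub_C hd]
      exact_mod_cast hd
    intro x y hxy
    have := (key x).symm.trans ((congrArg _ hxy).trans (key y))
    exact Polynomial.C_injective this
  intro a b h
  have := congrArg (theta π d r) h
  rw [← AlgHom.comp_apply, ← AlgHom.comp_apply, theta_beta] at this
  exact halg this

end Beta

section Fixed

variable (ζ : R)

/-- the polynomial-level twist `X 0 ↦ ζ^j X 0` -/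
def LL (j : ℕ) : MvPolynomial (Fin (r + 1)) R →ₐ[R] MvPolynomial (Fin (r + 1)) R :=
  MvPolynomial.aeval (Fin.cases (MvPolynomial.C (ζ ^ j) * MvPolynomial.X 0)
    (fun i => MvPolynomial.X i.succ))

lemma LL_monomial (j : ℕ) (m : Fin (r + 1) →₀ ℕ) (c : R) :
    LL r ζ j (MvPolynomial.monomial m c)
      = MvPolynomial.C (ζ ^ (j * m 0)) * MvPolynomial.monomial m c := by
  rw [LL, aeval_monomial, MvPolynomial.monomial_eq,
    Finsupp.prod_fintype _ _ (fun i => pow_zero _),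
    Finsupp.prod_fintype _ _ (fun i => pow_zero _),
    Fin.prod_univ_succ, Fin.prod_univ_succ]
  simp only [Fin.cases_zero, Fin.cases_succ, algebraMap_eq]
  rw [mul_pow, ← MvPolynomial.C_pow, ← pow_mul, mul_comm j (m 0)]
  ring_nf

lemma LL_zero_apply (p : MvPolynomial (Fin (r + 1)) R) : LL r ζ 0 p = p := by
  have : LL r ζ 0 = AlgHom.id R _ := by
    apply MvPolynomial.algHom_ext
    intro i
    induction i using Fin.cases with
    | zero => simp [LL]
    | succ j => simp [LL]
  rw [this]; rfl

/-- the part of `p` supported on monomials with `d ∣ m 0` -/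
def goodPart (p : MvPolynomial (Fin (r + 1)) R) : MvPolynomial (Fin (r + 1)) R :=
  AddMonoidAlgebra.ofCoeff (Finsupp.filter (fun m : Fin (r + 1) →₀ ℕ => d ∣ m 0) (AddMonoidAlgebra.coeff p))

lemma goodPart_add (p q : MvPolynomial (Fin (r + 1)) R) :
    goodPart d r (p + q) = goodPart d r p + goodPart d r q := by
  exact congrArg AddMonoidAlgebra.ofCoeff Finsupp.filter_add

lemma goodPart_monomial (m : Fin (r + 1) →₀ ℕ) (c : R) :
    goodPart d r (MvPolynomial.monomial m c)
      = if d ∣ m 0 then MvPolynomial.monomial m c else 0 := by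
  rw [goodPart, ← MvPolynomial.single_eq_monomial, AddMonoidAlgebra.coeff_single]
  split_ifs with h
  · rw [Finsupp.filter_single_of_pos (p := fun m : Fin (r + 1) →₀ ℕ => d ∣ m 0) h]
    rfl
  · rw [Finsupp.filter_single_of_neg (p := fun m : Fin (r + 1) →₀ ℕ => d ∣ m 0) h]
    rfl

lemma goodPart_support (p : MvPolynomial (Fin (r + 1)) R) (m : Fin (r + 1) →₀ ℕ)
    (hm : m ∈ (goodPart d r p).support) : d ∣ m 0 := by
  have h2 := hm
  rw [goodPart] at h2
  have h3 : m ∈ (Finsupp.filter (fun m : Fin (r + 1) →₀ ℕ => d ∣ m 0) (AddMonoidAlgebra.coeff p)).support := h2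
  rw [Finsupp.support_filter] at h3
  exact (Finset.mem_filter.mp h3).2

variable [IsDomain R]

lemma sum_LL (hζ : IsPrimitiveRoot ζ d) (p : MvPolynomial (Fin (r + 1)) R) :
    ∑ j ∈ Finset.range d, LL r ζ j p = MvPolynomial.C (d : R) * goodPart d r p := by
  classical
  induction p using MvPolynomial.induction_on' with
  | add p q hp hq =>
    simp only [map_add, Finset.sum_add_distrib, hp, hq, goodPart_add, mul_add]
  | monomial m c =>
    simp only [LL_monomial, goodPart_monomial]
    rw [← Finset.sum_mul, ← map_sum]
    have key : ∑ j ∈ Finset.range d, ζ ^ (j * m 0) = if d ∣ m 0 then (d : R) else 0 := by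
      have hpow : ∀ j : ℕ, ζ ^ (j * m 0) = (ζ ^ m 0) ^ j := fun j => by
        rw [← pow_mul, mul_comm]
      simp only [hpow]
      split_ifs with h
      · have h1 : ζ ^ m 0 = 1 := (hζ.pow_eq_one_iff_dvd _).mpr h
        simp [h1]
      · have h1 : ζ ^ m 0 ≠ 1 := fun hc => h ((hζ.pow_eq_one_iff_dvd _).mp hc)
        have h2 : (∑ j ∈ Finset.range d, (ζ ^ m 0) ^ j) * (ζ ^ m 0 - 1)
            = (ζ ^ m 0) ^ d - 1 := geom_sum_mul _ _
        have h3 : (ζ ^ m 0) ^ d = 1 := by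
          rw [← pow_mul, mul_comm, pow_mul, hζ.pow_eq_one, one_pow]
        rw [h3, sub_self] at h2
        rcases mul_eq_zero.mp h2 with h4 | h4
        · exact h4
        · exact absurd (sub_eq_zero.mp h4) h1
    rw [key]
    split_ifs with h
    · rfl
    · simp

end Fixed


section Range

lemma good_mem (p : MvPolynomial (Fin (r + 1)) R) :
    qM π d r (goodPart d r p) ∈ (beta π d r).range := by
  classical
  induction p using MvPolynomial.induction_on' with
  | add p q hp hq =>
    rw [goodPart_add, map_add]
    exact Subalgebra.add_mem _ hp hq
  | monomial m c =>
    rw [goodPart_monomial]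
    split_ifs with hdvd
    · obtain ⟨n, hn⟩ := hdvd
      refine ⟨Ideal.Quotient.mk _ (MvPolynomial.C c * MvPolynomial.X 0 ^ n
        * ∏ i : Fin r, MvPolynomial.X i.succ ^ m i.succ), ?_⟩
      have hb : beta π d r (Ideal.Quotient.mk _ (MvPolynomial.C c * MvPolynomial.X 0 ^ n
          * ∏ i : Fin r, MvPolynomial.X i.succ ^ m i.succ))
          = algebraMap R _ c * ((qM π d r (MvPolynomial.X 0) ^ d) ^ n)
            * ∏ i : Fin r, qM π d r (MvPolynomial.X i.succ) ^ m i.succ := by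
        rw [show (Ideal.Quotient.mk _ (MvPolynomial.C c * MvPolynomial.X 0 ^ n
          * ∏ i : Fin r, MvPolynomial.X i.succ ^ m i.succ) : TargetRing R π d r)
          = Ideal.Quotient.mk _ (MvPolynomial.C c) * Ideal.Quotient.mk _ (MvPolynomial.X 0) ^ n
            * ∏ i : Fin r, Ideal.Quotient.mk _ (MvPolynomial.X i.succ) ^ m i.succ by
            simp only [← map_pow]
            rw [← map_prod, ← map_mul, ← map_mul]]
        rw [map_mul, map_mul, map_pow, map_prod,
          show (Ideal.Quotient.mk _ (MvPolynomial.C c) : TargetRing R π d r)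
            = algebraMap R _ c from rfl, AlgHom.commutes]
        simp only [map_pow, beta_X0, beta_Xsucc]
      rw [show (beta π d r).toRingHom = ((beta π d r : TargetRing R π d r →+* MR π d r)) from rfl]
      show beta π d r _ = qM π d r (MvPolynomial.monomial m c)
      rw [hb]
      rw [MvPolynomial.monomial_eq, map_mul,
        show (qM π d r) ((m.prod fun n e => MvPolynomial.X n ^ e : MvPolynomial (Fin (r + 1)) R))
          = ∏ i : Fin (r + 1), qM π d r (MvPolynomial.X i) ^ m i by
          rw [Finsupp.prod_fintype _ _ (fun i => pow_zero _), map_prod]; simp [map_pow],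
        show (∏ i : Fin (r + 1), qM π d r (MvPolynomial.X i) ^ m i)
          = qM π d r (MvPolynomial.X 0) ^ m 0
            * ∏ i : Fin r, qM π d r (MvPolynomial.X i.succ) ^ m i.succ from
          Fin.prod_univ_succ _,
        show (MvPolynomial.C c : MvPolynomial (Fin (r + 1)) R) = algebraMap R _ c from rfl,
        AlgHom.commutes]
      rw [← pow_mul, ← hn, ← mul_assoc]
    · rw [map_zero]
      exact Subalgebra.zero_mem _

end Range

section MainLemmas

lemma range_le_fixed (ζ : R) (hζd : ζ ^ d = 1) (s : MR π d r ≃ₐ[R] MR π d r)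
    (hs0 : s (qM π d r (MvPolynomial.X 0)) = algebraMap R _ ζ * qM π d r (MvPolynomial.X 0))
    (hss : ∀ j : Fin r, s (qM π d r (MvPolynomial.X j.succ))
      = qM π d r (MvPolynomial.X j.succ)) :
    (beta π d r).range ≤ fixedSubalgebra s := by
  have hcomp : s.toAlgHom.comp (beta π d r) = beta π d r := by
    apply Ideal.Quotient.algHom_ext
    apply MvPolynomial.algHom_ext
    intro i
    show s (beta π d r (Ideal.Quotient.mk _ (MvPolynomial.X i)))
      = beta π d r (Ideal.Quotient.mk _ (MvPolynomial.X i))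
    induction i using Fin.cases with
    | zero =>
      rw [beta_X0, map_pow, hs0, mul_pow, ← map_pow, hζd, map_one, one_mul]
    | succ j =>
      rw [beta_Xsucc, hss]
  rintro x ⟨b, rfl⟩
  show s (beta π d r b) = beta π d r b
  exact AlgHom.congr_fun hcomp b

lemma qM_LL_succ (ζ : R) (s : MR π d r ≃ₐ[R] MR π d r)
    (hs0 : s (qM π d r (MvPolynomial.X 0)) = algebraMap R _ ζ * qM π d r (MvPolynomial.X 0))
    (hss : ∀ j : Fin r, s (qM π d r (MvPolynomial.X j.succ))
      = qM π d r (MvPolynomial.X j.succ)) (j : ℕ) (p : MvPolynomial (Fin (r + 1)) R) :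
    qM π d r (LL r ζ (j + 1) p) = s (qM π d r (LL r ζ j p)) := by
  have hcomp : (qM π d r).comp (LL r ζ (j + 1))
      = (s.toAlgHom.comp (qM π d r)).comp (LL r ζ j) := by
    apply MvPolynomial.algHom_ext
    intro i
    induction i using Fin.cases with
    | zero =>
      show qM π d r (LL r ζ (j + 1) (MvPolynomial.X 0))
        = s (qM π d r (LL r ζ j (MvPolynomial.X 0)))
      rw [LL, LL, aeval_X, aeval_X]
      simp only [Fin.cases_zero]
      rw [map_mul, map_mul]
      simp only [show ∀ z : R, qM π d r (MvPolynomial.C z) = algebraMap R _ z from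
        fun z => (qM π d r).commutes z]
      rw [map_mul, AlgEquiv.commutes, hs0, ← mul_assoc, ← map_mul, ← pow_succ]
    | succ i =>
      show qM π d r (LL r ζ (j + 1) (MvPolynomial.X i.succ))
        = s (qM π d r (LL r ζ j (MvPolynomial.X i.succ)))
      rw [LL, LL, aeval_X, aeval_X]
      simp only [Fin.cases_succ]
      rw [hss]
  exact AlgHom.congr_fun hcomp p

variable [IsDomain R]

lemma fixed_le_range (ζ : R) (hζ : IsPrimitiveRoot ζ d) (u : R) (hu : u * (d : R) = 1)
    (s : MR π d r ≃ₐ[R] MR π d r)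
    (hs0 : s (qM π d r (MvPolynomial.X 0)) = algebraMap R _ ζ * qM π d r (MvPolynomial.X 0))
    (hss : ∀ j : Fin r, s (qM π d r (MvPolynomial.X j.succ))
      = qM π d r (MvPolynomial.X j.succ)) :
    fixedSubalgebra s ≤ (beta π d r).range := by
  intro a ha
  have ha' : s a = a := ha
  obtain ⟨p, rfl⟩ := Ideal.Quotient.mk_surjective a
  have hqp : ∀ q : MvPolynomial (Fin (r + 1)) R,
      (Ideal.Quotient.mk _ q : MR π d r) = qM π d r q := fun _ => rfl
  rw [hqp] at ha' ⊢
  have hall : ∀ j : ℕ, qM π d r (LL r ζ j p) = qM π d r p := by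
    intro j
    induction j with
    | zero => rw [LL_zero_apply]
    | succ j ih => rw [qM_LL_succ π d r ζ s hs0 hss, ih, ha']
  have hsum : qM π d r (∑ j ∈ Finset.range d, LL r ζ j p) = d • qM π d r p := by
    rw [map_sum]
    simp only [hall]
    rw [Finset.sum_const, Finset.card_range]
  rw [sum_LL d r ζ hζ p] at hsum
  have hC : ∀ z : R, qM π d r (MvPolynomial.C z) = algebraMap R (MR π d r) z :=
    fun z => (qM π d r).commutes z
  have hd' : algebraMap R (MR π d r) (d : R) * qM π d r (goodPart d r p)
      = algebraMap R (MR π d r) (d : R) * qM π d r p :=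
    calc algebraMap R (MR π d r) ((d : ℕ) : R) * qM π d r (goodPart d r p)
        = qM π d r (MvPolynomial.C ((d : ℕ) : R) * goodPart d r p) := by rw [map_mul, hC]
      _ = d • qM π d r p := hsum
      _ = algebraMap R (MR π d r) ((d : ℕ) : R) * qM π d r p := by
          rw [nsmul_eq_mul, ← map_natCast (algebraMap R (MR π d r)) d]
  have hgood : qM π d r p = qM π d r (goodPart d r p) := by
    have h2 := congrArg (fun x => algebraMap R (MR π d r) u * x) hd'
    simpa only [← mul_assoc, ← map_mul, hu, map_one, one_mul] using h2.symm
  rw [hgood]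
  exact good_mem π d r p

end MainLemmas

lemma sigma_apply (hd : 0 < d) (ζ : R) (hζd : ζ ^ d = 1) (x : ATilde R π d r) :
    sigma π d r hd ζ hζd x = sigmaHom π d r ζ hζd x := rfl

lemma PhiA_apply (x : ATilde R π d r) : ΦA π d r x = toM π d r x := rfl

lemma PhiA_symm_apply (x : MR π d r) : (ΦA π d r).symm x = toA π d r x := rfl

end Stmt14
end Stmt14Aux

set_option maxHeartbeats 1000000 in
/-- Let `R` be a DVR containing a field of characteristic zero with a primitive `d`-th
root of unity `ζ`, `π` a uniformizer, and consider
`Ã = R̃[x_0,…,x_r]/(x_0 x_1 ⋯ x_r - π^{1/d})` over `R̃ = R[π^{1/d}]`, with the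
`μ_d`-action fixing `R[x_1,…,x_r]`, of weight `1` on `x_0`, and of weight `i` on
`π^{i/d}`. This action exists, and for any generator `σ` of it the invariant ring
satisfies `Ã^{μ_d} ≅ R[y_0, x_1, …, x_r]/(y_0 x_1^d ⋯ x_r^d - π)`, with `y_0`
corresponding to `x_0^d`. -/
theorem stmt14 {k R : Type*} [Field k] [CharZero k] [CommRing R] [IsDomain R]
    [IsDiscreteValuationRing R] [Algebra k R]
    (π : R) (hπ : Irreducible π) (d : ℕ) (hd : 0 < d) (ζ : R) (hζ : IsPrimitiveRoot ζ d)
    (r : ℕ) :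
    (∃ σ : ATilde R π d r ≃ₐ[R] ATilde R π d r, muActionGen R π d r ζ σ)
    ∧ ∀ σ : ATilde R π d r ≃ₐ[R] ATilde R π d r, muActionGen R π d r ζ σ →
        ∃ e : TargetRing R π d r ≃ₐ[R] ↥(fixedSubalgebra σ),
          ((e (Ideal.Quotient.mk _ (MvPolynomial.X 0)) : ↥(fixedSubalgebra σ))
              : ATilde R π d r)
            = Ideal.Quotient.mk _ (MvPolynomial.X 0) ^ d := by
  classical
  open Stmt14 in
  have hζd : ζ ^ d = 1 := hζ.pow_eq_one
  constructor
  · refine ⟨Stmt14.sigma π d r hd ζ hζd, ?_, ?_, ?_⟩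
    · rw [Stmt14.sigma_apply]
      exact Stmt14.sigmaHom_X0 π d r ζ hζd
    · intro i
      rw [Stmt14.sigma_apply]
      exact Stmt14.sigmaHom_Xsucc π d r ζ hζd i
    · rw [Stmt14.sigma_apply]
      exact Stmt14.sigmaHom_C_tt π d r ζ hζd
  · intro σ hσ
    obtain ⟨hσ0, hσs, hσt⟩ := hσ
    set Φ := Stmt14.ΦA π d r with hΦ
    set s : Stmt14.MR π d r ≃ₐ[R] Stmt14.MR π d r := (Φ.symm.trans σ).trans Φ with hs
    have hs_apply : ∀ x, s x = Φ (σ (Φ.symm x)) := fun _ => rfl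
    have hΦX : ∀ i, Φ (Ideal.Quotient.mk _ (MvPolynomial.X i))
        = Stmt14.qM π d r (MvPolynomial.X i) := fun i => Stmt14.toM_X π d r i
    have hΦsymmX : ∀ i, Φ.symm (Stmt14.qM π d r (MvPolynomial.X i))
        = Ideal.Quotient.mk _ (MvPolynomial.X i) := fun i => Stmt14.toA_X π d r i
    have hs0 : s (Stmt14.qM π d r (MvPolynomial.X 0))
        = algebraMap R _ ζ * Stmt14.qM π d r (MvPolynomial.X 0) := by
      rw [hs_apply, hΦsymmX 0, hσ0, map_mul, AlgEquiv.commutes, hΦX 0]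
    have hss : ∀ j : Fin r, s (Stmt14.qM π d r (MvPolynomial.X j.succ))
        = Stmt14.qM π d r (MvPolynomial.X j.succ) := by
      intro j
      rw [hs_apply, hΦsymmX j.succ, hσs j, hΦX j.succ]
    have hu : algebraMap k R ((d : k)⁻¹) * ((d : ℕ) : R) = 1 := by
      rw [← map_natCast (algebraMap k R) d, ← map_mul,
        inv_mul_cancel₀ (Nat.cast_ne_zero.mpr hd.ne' : ((d : ℕ) : k) ≠ 0), map_one]
    have hrange : (Stmt14.beta π d r).range = fixedSubalgebra s :=
      le_antisymm (Stmt14.range_le_fixed π d r ζ hζd s hs0 hss)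
        (Stmt14.fixed_le_range π d r ζ hζ _ hu s hs0 hss)
    have hmap : Subalgebra.map Φ.symm.toAlgHom (fixedSubalgebra s) = fixedSubalgebra σ := by
      ext x
      rw [Subalgebra.mem_map]
      constructor
      · rintro ⟨y, hy, rfl⟩
        have hy' : Φ (σ (Φ.symm y)) = y := (hs_apply y) ▸ hy
        show σ (Φ.symm y) = Φ.symm y
        calc σ (Φ.symm y) = Φ.symm (Φ (σ (Φ.symm y))) := (Φ.symm_apply_apply _).symm
          _ = Φ.symm y := by rw [hy']
      · intro hx
        refine ⟨Φ x, ?_, Φ.symm_apply_apply x⟩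
        show s (Φ x) = Φ x
        rw [hs_apply, Φ.symm_apply_apply]
        exact congrArg Φ hx
    have hinj := Stmt14.beta_injective π d r hd
    refine ⟨(((AlgEquiv.ofInjective (Stmt14.beta π d r) hinj).trans
        (Subalgebra.equivOfEq _ _ hrange)).trans
      ((Subalgebra.equivMapOfInjective _ Φ.symm.toAlgHom Φ.symm.injective).trans
        (Subalgebra.equivOfEq _ _ hmap))), ?_⟩
    simp only [AlgEquiv.trans_apply]
    rw [Subalgebra.equivOfEq_apply, Subalgebra.equivOfEq_apply]
    erw [Subalgebra.coe_equivMapOfInjective_apply]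
    simp only [Subalgebra.equivOfEq_apply]
    show Φ.symm ((AlgEquiv.ofInjective (Stmt14.beta π d r) hinj
      (Ideal.Quotient.mk _ (MvPolynomial.X 0)) : (Stmt14.beta π d r).range) : Stmt14.MR π d r)
      = Ideal.Quotient.mk _ (MvPolynomial.X 0) ^ d
    rw [AlgEquiv.ofInjective_apply, Stmt14.beta_X0, map_pow, hΦsymmX 0]
    exact Φ.symm.injective
end
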